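/- arXiv:math/0503098 — 3 statements merged into one kernel-verified Lean document; each statement's English description precedes it below -/
import Mathlib

section
/- Let (Ω,Σ,μ) be a measure space and Φ a regular set isomorphism of the σ-ring Σ' generated by sets of σ-finite measure. Define ν(A) = μ(Φ⁻¹(A)); then ν is absolutely continuous with respect to μ, and setting h = (dν/dμ)^{1/p}, for every f ∈ L^p(Ω,X) the function h·Φ(f) belongs to L^p(Ω,X) and ‖h·Φ(f)‖_p = ‖f‖_p. -/
open MeasureTheory Filter
open scoped ENNReal NNReal
open scoped Topology

/-- `A` is a measurable set of σ-finite measure (i.e. belongs to the σ-ring `Σ'`). -/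
def SFin {Ω : Type*} [MeasurableSpace Ω] (μ : Measure Ω) (A : Set Ω) : Prop :=
  MeasurableSet A ∧ SigmaFinite (μ.restrict A)

/-- A regular set isomorphism of the σ-ring `Σ'` of measurable sets of σ-finite measure,
defined modulo null sets. -/
structure RegularSetIso {Ω : Type*} [MeasurableSpace Ω] (μ : Measure Ω) where
  toFun : Set Ω → Set Ω
  maps_sfin : ∀ A, SFin μ A → SFin μ (toFun A)
  map_diff : ∀ A B, SFin μ A → SFin μ B → toFun (A \ B) =ᵐ[μ] (toFun A \ toFun B : Set Ω)
  map_iUnion : ∀ A : ℕ → Set Ω, (∀ n, SFin μ (A n)) → Pairwise (Function.onFun Disjoint A) →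
    toFun (⋃ n, A n) =ᵐ[μ] (⋃ n, toFun (A n) : Set Ω)
  null_iff : ∀ A, SFin μ A → (μ (toFun A) = 0 ↔ μ A = 0)

lemma aux_lintegral_sum_indicator {Ω : Type*} [MeasurableSpace Ω] (μ : Measure Ω)
    {X : Type*} [NormedAddCommGroup X] {r : ℝ} (hr : 0 < r)
    {G : Ω → ℝ≥0∞} (hG : Measurable G) {ι : Type*} (s : Finset ι) (B : ι → Set Ω)
    (hB : ∀ i ∈ s, MeasurableSet (B i))
    (hd : ∀ i ∈ s, ∀ j ∈ s, i ≠ j → μ (B i ∩ B j) = 0) (x : ι → X) :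
    ∫⁻ t, G t * (‖(∑ i ∈ s, (B i).indicator fun _ => x i) t‖₊ : ℝ≥0∞) ^ r ∂μ
      = ∑ i ∈ s, (‖x i‖₊ : ℝ≥0∞) ^ r * ∫⁻ t in B i, G t ∂μ := by
  have hae : ∀ᵐ t ∂μ, ∀ i ∈ (s : Set ι), ∀ j ∈ (s : Set ι), i ≠ j → ¬(t ∈ B i ∧ t ∈ B j) := by
    rw [ae_ball_iff s.countable_toSet]
    intro i hi
    rw [ae_ball_iff s.countable_toSet]
    intro j hj
    by_cases hij : i = j
    · exact Eventually.of_forall fun t hij' => absurd hij hij'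
    · have : μ (B i ∩ B j) = 0 := hd i hi j hj hij
      filter_upwards [measure_eq_zero_iff_ae_notMem.mp this] with t ht _ hmem
      exact ht ⟨hmem.1, hmem.2⟩
  have hptwise : ∀ᵐ t ∂μ,
      G t * (‖(∑ i ∈ s, (B i).indicator fun _ => x i) t‖₊ : ℝ≥0∞) ^ r
        = ∑ i ∈ s, (B i).indicator (fun t => G t * (‖x i‖₊ : ℝ≥0∞) ^ r) t := by
    filter_upwards [hae] with t ht
    by_cases hmem : ∃ j ∈ s, t ∈ B j
    · obtain ⟨j, hj, htj⟩ := hmem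
      have h1 : (∑ i ∈ s, (B i).indicator fun _ => x i) t = x j := by
        rw [Finset.sum_apply]
        rw [Finset.sum_eq_single_of_mem j hj]
        · exact Set.indicator_of_mem htj _
        · intro i hi hij
          exact Set.indicator_of_notMem (fun hti => ht i hi j hj hij ⟨hti, htj⟩) _
      have h2 : ∑ i ∈ s, (B i).indicator (fun t => G t * (‖x i‖₊ : ℝ≥0∞) ^ r) t
          = G t * (‖x j‖₊ : ℝ≥0∞) ^ r := by
        rw [Finset.sum_eq_single_of_mem j hj]
        · exact Set.indicator_of_mem htj _
        · intro i hi hij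
          exact Set.indicator_of_notMem (fun hti => ht i hi j hj hij ⟨hti, htj⟩) _
      rw [h1, h2]
    · push_neg at hmem
      have h1 : (∑ i ∈ s, (B i).indicator fun _ => x i) t = 0 := by
        rw [Finset.sum_apply]
        exact Finset.sum_eq_zero fun i hi => Set.indicator_of_notMem (hmem i hi) _
      have h2 : ∑ i ∈ s, (B i).indicator (fun t => G t * (‖x i‖₊ : ℝ≥0∞) ^ r) t = 0 :=
        Finset.sum_eq_zero fun i hi => Set.indicator_of_notMem (hmem i hi) _
      rw [h1, h2, nnnorm_zero]
      simp [ENNReal.zero_rpow_of_pos hr]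
  rw [lintegral_congr_ae hptwise, lintegral_finset_sum s (f := fun i => (B i).indicator (fun t => G t * (‖x i‖₊ : ℝ≥0∞) ^ r)) (fun i hi =>
    ((hG.mul measurable_const).indicator (hB i hi)))]
  refine Finset.sum_congr rfl fun i hi => ?_
  rw [lintegral_indicator (hB i hi), lintegral_mul_const _ hG, mul_comm]

lemma aux_dist_toLp {Ω : Type*} [MeasurableSpace Ω] {μ : Measure Ω}
    {X : Type*} [NormedAddCommGroup X] {p : ℝ≥0∞} [Fact (1 ≤ p)]
    {u v : Ω → X} (hu : MemLp u p μ) (hv : MemLp v p μ) :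
    dist (hu.toLp u) (hv.toLp v) = (eLpNorm (u - v) p μ).toReal := by
  rw [Lp.dist_def]
  congr 1
  apply eLpNorm_congr_ae
  filter_upwards [hu.coeFn_toLp, hv.coeFn_toLp] with t h1 h2
  simp [h1, h2]

/-- If `Φ` is a regular set isomorphism, `ν(A) = μ(Φ⁻¹(A))`, and `h = (dν/dμ)^{1/p}`, then
for every `f ∈ L^p(Ω,X)` the function `h·Φ(f)` is in `L^p(Ω,X)` and `‖h·Φ(f)‖_p = ‖f‖_p`. -/
theorem regularSetIso_weighted_isometry
    {Ω : Type*} [MeasurableSpace Ω] (μ : Measure Ω)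
    {X : Type*} [NormedAddCommGroup X] [NormedSpace ℝ X] [CompleteSpace X]
    [TopologicalSpace.SeparableSpace X]
    (p : ℝ≥0∞) [Fact (1 ≤ p)] (hp_ne_top : p ≠ ∞)
    (Φ Ψ : RegularSetIso μ)
    -- `Ψ` is the inverse of `Φ` (modulo null sets):
    (hΦΨ : ∀ A, SFin μ A → Φ.toFun (Ψ.toFun A) =ᵐ[μ] A)
    (hΨΦ : ∀ A, SFin μ A → Ψ.toFun (Φ.toFun A) =ᵐ[μ] A)
    -- `ν(A) = μ(Φ⁻¹(A))` (absolute continuity w.r.t. `μ` is part of the conclusion below):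
    (ν : Set Ω → ℝ≥0∞) (hν : ∀ A, SFin μ A → ν A = μ (Ψ.toFun A))
    -- `h = (dν/dμ)^{1/p}`, i.e. `h ≥ 0` and `h^p` is a density of `ν` w.r.t. `μ`:
    (h : Ω → ℝ) (hh_meas : Measurable h) (hh_nonneg : ∀ t, 0 ≤ h t)
    (hh : ∀ A, SFin μ A → ∫⁻ t in A, ENNReal.ofReal (h t ^ p.toReal) ∂μ = ν A)
    -- `ΦF` is the induced map of `Φ` on `X`-valued measurable functions:
    (ΦF : (Ω → X) → (Ω → X))
    (hΦF_ind : ∀ (A : Set Ω) (x : X), SFin μ A →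
      ΦF (A.indicator fun _ => x) =ᵐ[μ] (Φ.toFun A).indicator fun _ => x)
    (hΦF_add : ∀ f g : Ω → X, ΦF (f + g) =ᵐ[μ] ΦF f + ΦF g)
    (hΦF_tendsto : ∀ (fn : ℕ → Ω → X) (f : Ω → X),
      TendstoInMeasure μ fn atTop f → TendstoInMeasure μ (fun n => ΦF (fn n)) atTop (ΦF f)) :
    -- conclusion: `ν ≪ μ` and `h·Φ(f)` is an `L^p` function of the same norm:
    (∀ A, SFin μ A → μ A = 0 → ν A = 0) ∧
    ∀ f : Ω → X, MemLp f p μ →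
      MemLp (fun t => h t • ΦF f t) p μ ∧
      eLpNorm (fun t => h t • ΦF f t) p μ = eLpNorm f p μ := by
  classical
  have hp1 : 1 ≤ p := Fact.out
  have hp0 : p ≠ 0 := (lt_of_lt_of_le zero_lt_one hp1).ne'
  have hr : 0 < p.toReal := ENNReal.toReal_pos hp0 hp_ne_top
  have part1 : ∀ A, SFin μ A → μ A = 0 → ν A = 0 := by
    intro A hA hA0
    rw [hν A hA]
    exact (Ψ.null_iff A hA).mpr hA0
  set G : Ω → ℝ≥0∞ := fun t => ENNReal.ofReal (h t ^ p.toReal) with hG_def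
  have hG : Measurable G := ENNReal.measurable_ofReal.comp (hh_meas.pow_const _)
  have hGnorm : ∀ t, (‖h t‖₊ : ℝ≥0∞) ^ p.toReal = G t := by
    intro t
    show (‖h t‖₊ : ℝ≥0∞) ^ p.toReal = ENNReal.ofReal (h t ^ p.toReal)
    rw [← enorm_eq_nnnorm, Real.enorm_eq_ofReal (hh_nonneg t),
      ENNReal.ofReal_rpow_of_nonneg (hh_nonneg t) hr.le]
  -- ΦF sends 0 to 0 a.e.
  have hΦF0 : ΦF 0 =ᵐ[μ] 0 := by
    have h00 := hΦF_add 0 0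
    rw [add_zero] at h00
    filter_upwards [h00] with t ht
    simp only [Pi.add_apply, Pi.zero_apply] at ht ⊢
    nth_rewrite 1 [← add_zero (ΦF 0 t)] at ht
    exact (add_left_cancel ht).symm
  -- ΦF commutes with finite sums a.e.
  have hΦF_sum : ∀ (s : Finset X) (F : X → Ω → X),
      ΦF (∑ i ∈ s, F i) =ᵐ[μ] ∑ i ∈ s, ΦF (F i) := by
    intro s F
    induction s using Finset.cons_induction with
    | empty => simpa using hΦF0
    | cons a s ha ih =>
      rw [Finset.sum_cons, Finset.sum_cons]
      exact (hΦF_add (F a) (∑ i ∈ s, F i)).trans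
        ((EventuallyEq.refl _ (ΦF (F a))).add ih)
  -- ΦF commutes with subtraction a.e.
  have hΦF_sub : ∀ f g : Ω → X, ΦF (f - g) =ᵐ[μ] ΦF f - ΦF g := by
    intro f g
    have := hΦF_add (f - g) g
    rw [sub_add_cancel] at this
    filter_upwards [this] with t ht
    simp only [Pi.add_apply] at ht
    simp only [Pi.sub_apply]
    rw [ht]
    abel
  -- finite measure measurable sets are SFin
  have hSFin : ∀ {A : Set Ω}, MeasurableSet A → μ A ≠ ∞ → SFin μ A := by
    intro A hA hfin
    refine ⟨hA, ?_⟩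
    have : IsFiniteMeasure (μ.restrict A) :=
      ⟨by rwa [Measure.restrict_apply_univ, lt_top_iff_ne_top]⟩
    infer_instance
  -- the key simple-function case
  have key : ∀ g : SimpleFunc Ω X, MemLp (⇑g) p μ →
      AEStronglyMeasurable (fun t => h t • ΦF (⇑g) t) μ ∧
      eLpNorm (fun t => h t • ΦF (⇑g) t) p μ = eLpNorm (⇑g) p μ := by
    intro g hg
    set s : Finset X := g.range.filter (· ≠ 0) with hs_def
    set A : X → Set Ω := fun y => ⇑g ⁻¹' {y} with hA_def
    have hAmeas : ∀ y, MeasurableSet (A y) := fun y => g.measurableSet_fiber y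
    have hASFin : ∀ y ∈ s, SFin μ (A y) := by
      intro y hy
      refine hSFin (hAmeas y) ?_
      exact (SimpleFunc.measure_preimage_lt_top_of_memLp hp0 hp_ne_top g hg y
        (by simpa using (Finset.mem_filter.mp hy).2)).ne
    set B : X → Set Ω := fun y => Φ.toFun (A y) with hB_def
    have hBSFin : ∀ y ∈ s, SFin μ (B y) := fun y hy => Φ.maps_sfin _ (hASFin y hy)
    have hBmeas : ∀ y ∈ s, MeasurableSet (B y) := fun y hy => (hBSFin y hy).1
    have hBdisj : ∀ y ∈ s, ∀ z ∈ s, y ≠ z → μ (B y ∩ B z) = 0 := by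
      intro y hy z hz hyz
      have hAyz : A y \ A z = A y := by
        ext t
        constructor
        · exact fun ht => ht.1
        · intro ht
          exact ⟨ht, fun ht2 => hyz ((show ⇑g t = y from ht).symm.trans ht2)⟩
      have h1 := Φ.map_diff (A y) (A z) (hASFin y hy) (hASFin z hz)
      rw [hAyz] at h1
      have h2 : (B y ∩ B z : Set Ω) =ᵐ[μ] ((B y \ B z) ∩ B z : Set Ω) :=
        h1.inter (EventuallyEq.refl _ _)
      rw [measure_congr h2, Set.diff_inter_self, measure_empty]
    have hrep : ⇑g = ∑ y ∈ s, (A y).indicator fun _ => y := by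
      funext t
      rw [Finset.sum_apply]
      by_cases h0 : g t = 0
      · rw [h0]
        symm
        apply Finset.sum_eq_zero
        intro y hy
        apply Set.indicator_of_notMem
        intro ht
        have hy0 : y ≠ 0 := by simpa using (Finset.mem_filter.mp hy).2
        exact hy0 ((show ⇑g t = y from ht).symm.trans h0)
      · have hmem : g t ∈ s := Finset.mem_filter.mpr ⟨g.mem_range_self t, by simpa using h0⟩
        symm
        have hz : ∀ y ∈ s, y ≠ g t → (A y).indicator (fun _ => y) t = 0 := by
          intro y hy hne
          have hnm : t ∉ A y := fun ht => hne (show ⇑g t = y from ht).symm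
          exact Set.indicator_of_notMem hnm (fun _ : Ω => y)
        rw [Finset.sum_eq_single_of_mem (g t) hmem hz]
        exact Set.indicator_of_mem (show t ∈ A (g t) from rfl) _
    have hΦrep : ΦF ⇑g =ᵐ[μ] ∑ y ∈ s, (B y).indicator fun _ => y := by
      have hstep1 : ΦF ⇑g =ᵐ[μ] ∑ y ∈ s, ΦF ((A y).indicator fun _ => y) := by
        rw [hrep]; exact hΦF_sum s _
      refine hstep1.trans ?_
      have hterms : ∀ᵐ t ∂μ, ∀ y ∈ (s : Set X),
          ΦF ((A y).indicator fun _ => y) t = (B y).indicator (fun _ => y) t :=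
        (ae_ball_iff s.countable_toSet).mpr fun y hy => hΦF_ind (A y) y (hASFin y hy)
      filter_upwards [hterms] with t ht
      rw [Finset.sum_apply, Finset.sum_apply]
      exact Finset.sum_congr rfl fun y hy => ht y hy
    have hI : ∀ y ∈ s, ∫⁻ t in B y, G t ∂μ = μ (A y) := by
      intro y hy
      calc ∫⁻ t in B y, G t ∂μ = ν (B y) := hh _ (hBSFin y hy)
        _ = μ (Ψ.toFun (B y)) := hν _ (hBSFin y hy)
        _ = μ (A y) := measure_congr (hΨΦ (A y) (hASFin y hy))
    have hL1 : ∫⁻ t, (‖h t • ΦF (⇑g) t‖₊ : ℝ≥0∞) ^ p.toReal ∂μ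
        = ∑ y ∈ s, (‖y‖₊ : ℝ≥0∞) ^ p.toReal * μ (A y) := by
      have hptw : ∀ᵐ t ∂μ, (‖h t • ΦF (⇑g) t‖₊ : ℝ≥0∞) ^ p.toReal
          = G t * (‖(∑ y ∈ s, (B y).indicator fun _ => y) t‖₊ : ℝ≥0∞) ^ p.toReal := by
        filter_upwards [hΦrep] with t ht
        rw [← ht, nnnorm_smul, ENNReal.coe_mul,
          ENNReal.mul_rpow_of_nonneg _ _ hr.le, hGnorm t]
      rw [lintegral_congr_ae hptw,
        aux_lintegral_sum_indicator μ hr hG s B hBmeas hBdisj (fun y => y)]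
      exact Finset.sum_congr rfl fun y hy => by rw [hI y hy]
    have hAdisj : ∀ y ∈ s, ∀ z ∈ s, y ≠ z → μ (A y ∩ A z) = 0 := by
      intro y hy z hz hyz
      have : A y ∩ A z = ∅ := by
        ext t
        simp only [Set.mem_inter_iff, Set.mem_empty_iff_false, iff_false, not_and]
        intro h1 h2
        exact hyz ((show ⇑g t = y from h1).symm.trans h2)
      rw [this, measure_empty]
    have hL2 : ∫⁻ t, (‖g t‖₊ : ℝ≥0∞) ^ p.toReal ∂μ
        = ∑ y ∈ s, (‖y‖₊ : ℝ≥0∞) ^ p.toReal * μ (A y) := by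
      have hptw : ∀ t, (‖g t‖₊ : ℝ≥0∞) ^ p.toReal
          = (fun _ : Ω => (1 : ℝ≥0∞)) t
            * (‖(∑ y ∈ s, (A y).indicator fun _ => y) t‖₊ : ℝ≥0∞) ^ p.toReal := by
        intro t
        rw [← hrep]
        simp
      rw [lintegral_congr hptw,
        aux_lintegral_sum_indicator μ hr measurable_const s A (fun y _ => hAmeas y)
          hAdisj (fun y => y)]
      refine Finset.sum_congr rfl fun y hy => ?_
      rw [setLIntegral_one]
    have hsm : AEStronglyMeasurable (fun t => h t • ΦF (⇑g) t) μ := by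
      have hsum_sm : StronglyMeasurable
          (fun t => (∑ y ∈ s, (B y).indicator fun _ => (y : X)) t) := by
        simp only [Finset.sum_apply]
        exact Finset.stronglyMeasurable_fun_sum s fun y hy =>
          (stronglyMeasurable_const.indicator (hBmeas y hy))
      have hcand : AEStronglyMeasurable
          (fun t => h t • (∑ y ∈ s, (B y).indicator fun _ => (y : X)) t) μ :=
        (hh_meas.stronglyMeasurable.smul hsum_sm).aestronglyMeasurable
      refine hcand.congr ?_
      filter_upwards [hΦrep] with t ht
      rw [ht]
    refine ⟨hsm, ?_⟩
    rw [eLpNorm_eq_lintegral_rpow_enorm_toReal hp0 hp_ne_top,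
      eLpNorm_eq_lintegral_rpow_enorm_toReal hp0 hp_ne_top]
    simp only [enorm_eq_nnnorm]
    rw [hL1, hL2]
  refine ⟨part1, fun f hf => ?_⟩
  -- choose approximating simple functions
  have hchoice : ∀ n : ℕ, ∃ g : SimpleFunc Ω X,
      eLpNorm (f - ⇑g) p μ < ((n : ℝ≥0∞) + 1)⁻¹ ∧ MemLp (⇑g) p μ :=
    fun n => hf.exists_simpleFunc_eLpNorm_sub_lt hp_ne_top (by simp)
  choose gs hgs hgsmem using hchoice
  have htend0 : Tendsto (fun n => eLpNorm (f - ⇑(gs n)) p μ) atTop (𝓝 0) := by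
    refine tendsto_of_tendsto_of_tendsto_of_le_of_le tendsto_const_nhds
      ENNReal.tendsto_inv_nat_nhds_zero (fun n => zero_le) (fun n => ?_)
    exact le_trans (hgs n).le (ENNReal.inv_le_inv' le_self_add)
  set Gn : ℕ → Ω → X := fun n t => h t • ΦF (⇑(gs n)) t with hGn_def
  have hGnmem : ∀ n, MemLp (Gn n) p μ := by
    intro n
    refine ⟨(key (gs n) (hgsmem n)).1, ?_⟩
    rw [show Gn n = fun t => h t • ΦF (⇑(gs n)) t from rfl, (key (gs n) (hgsmem n)).2]
    exact (hgsmem n).2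
  have hdiff : ∀ n m, eLpNorm (Gn n - Gn m) p μ = eLpNorm (⇑(gs n) - ⇑(gs m)) p μ := by
    intro n m
    have h1 : (Gn n - Gn m) =ᵐ[μ] fun t => h t • ΦF (⇑(gs n) - ⇑(gs m)) t := by
      filter_upwards [hΦF_sub (⇑(gs n)) (⇑(gs m))] with t ht
      simp only [Pi.sub_apply, hGn_def, ht, smul_sub]
    rw [eLpNorm_congr_ae h1]
    have h2 : ⇑(gs n) - ⇑(gs m) = ⇑(gs n - gs m) := (SimpleFunc.coe_sub _ _).symm
    rw [h2]
    exact (key (gs n - gs m) (by rw [← h2]; exact (hgsmem n).sub (hgsmem m))).2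
  set Fn : ℕ → Lp X p μ := fun n => (hGnmem n).toLp (Gn n) with hFn_def
  set S : ℕ → Lp X p μ := fun n => (hgsmem n).toLp (⇑(gs n)) with hS_def
  have hS_tend : Tendsto S atTop (𝓝 (hf.toLp f)) := by
    rw [tendsto_iff_dist_tendsto_zero]
    have hdist : ∀ n, dist (S n) (hf.toLp f) = (eLpNorm (f - ⇑(gs n)) p μ).toReal := by
      intro n
      rw [show S n = (hgsmem n).toLp (⇑(gs n)) from rfl, aux_dist_toLp, eLpNorm_sub_comm]
    have htr : Tendsto (fun n => (eLpNorm (f - ⇑(gs n)) p μ).toReal) atTop (𝓝 0) := by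
      have := (ENNReal.tendsto_toReal ENNReal.zero_ne_top).comp htend0
      simpa [Function.comp_def] using this
    exact htr.congr fun n => (hdist n).symm
  have hdistFn : ∀ n m, dist (Fn n) (Fn m) = dist (S n) (S m) := by
    intro n m
    rw [show Fn n = (hGnmem n).toLp (Gn n) from rfl,
      show Fn m = (hGnmem m).toLp (Gn m) from rfl,
      show S n = (hgsmem n).toLp (⇑(gs n)) from rfl,
      show S m = (hgsmem m).toLp (⇑(gs m)) from rfl,
      aux_dist_toLp, aux_dist_toLp, hdiff n m]
  have hF_cauchy : CauchySeq Fn := by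
    have hS_cauchy := hS_tend.cauchySeq
    rw [Metric.cauchySeq_iff] at hS_cauchy ⊢
    intro ε hε
    obtain ⟨N, hN⟩ := hS_cauchy ε hε
    exact ⟨N, fun m hm n hn => by rw [hdistFn]; exact hN m hm n hn⟩
  obtain ⟨L, hL⟩ := cauchySeq_tendsto_of_complete hF_cauchy
  have hGL : Tendsto (fun n => eLpNorm (Gn n - ⇑L) p μ) atTop (𝓝 0) := by
    have hdistL : ∀ n, eLpNorm (Gn n - ⇑L) p μ = ENNReal.ofReal (dist (Fn n) L) := by
      intro n
      have h1 : ⇑(Fn n) =ᵐ[μ] Gn n := (hGnmem n).coeFn_toLp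
      have he : eLpNorm ((⇑(Fn n) : Ω → X) - ⇑L) p μ = eLpNorm (Gn n - ⇑L) p μ :=
        eLpNorm_congr_ae (h1.sub (EventuallyEq.refl _ _))
      have hne : eLpNorm ((⇑(Fn n) : Ω → X) - ⇑L) p μ ≠ ∞ := by
        rw [he]; exact ((hGnmem n).sub (Lp.memLp L)).eLpNorm_ne_top
      rw [Lp.dist_def, ← he, ENNReal.ofReal_toReal hne]
    have hd0 : Tendsto (fun n => dist (Fn n) L) atTop (𝓝 0) :=
      tendsto_iff_dist_tendsto_zero.mp hL
    have := (ENNReal.continuous_ofReal.tendsto 0).comp hd0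
    simp only [hdistL]
    simpa [Function.comp_def] using this
  have hms1 : TendstoInMeasure μ (fun n => ⇑(gs n)) atTop f := by
    refine tendstoInMeasure_of_tendsto_eLpNorm hp0 (fun n => (hgsmem n).1) hf.1 ?_
    exact htend0.congr fun n => by rw [eLpNorm_sub_comm]
  have hms2 := hΦF_tendsto (fun n => ⇑(gs n)) f hms1
  obtain ⟨ns, hns_mono, hns_ae⟩ := hms2.exists_seq_tendsto_ae
  have hGL' : Tendsto (fun k => eLpNorm (Gn (ns k) - ⇑L) p μ) atTop (𝓝 0) :=
    hGL.comp hns_mono.tendsto_atTop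
  have hms3 : TendstoInMeasure μ (fun k => Gn (ns k)) atTop ⇑L :=
    tendstoInMeasure_of_tendsto_eLpNorm hp0 (fun k => (hGnmem (ns k)).1)
      (Lp.aestronglyMeasurable L) hGL'
  obtain ⟨ms, hms_mono, hms_ae⟩ := hms3.exists_seq_tendsto_ae
  have hae : (fun t => h t • ΦF f t) =ᵐ[μ] ⇑L := by
    filter_upwards [hns_ae, hms_ae] with t h1 h2
    have h1' : Tendsto (fun j => ΦF (⇑(gs (ns (ms j)))) t) atTop (𝓝 (ΦF f t)) :=
      h1.comp hms_mono.tendsto_atTop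
    have h3 : Tendsto (fun j => Gn (ns (ms j)) t) atTop (𝓝 (h t • ΦF f t)) :=
      h1'.const_smul (h t)
    exact tendsto_nhds_unique h3 h2
  have hmem : MemLp (fun t => h t • ΦF f t) p μ := (Lp.memLp L).ae_eq hae.symm
  refine ⟨hmem, ?_⟩
  have hnormFn : ∀ n, ‖Fn n‖ = ‖S n‖ := by
    intro n
    rw [show Fn n = (hGnmem n).toLp (Gn n) from rfl,
      show S n = (hgsmem n).toLp (⇑(gs n)) from rfl,
      Lp.norm_toLp, Lp.norm_toLp,
      show Gn n = fun t => h t • ΦF (⇑(gs n)) t from rfl,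
      (key (gs n) (hgsmem n)).2]
  have h4 : Tendsto (fun n => ‖S n‖) atTop (𝓝 ‖L‖) :=
    (hL.norm).congr fun n => hnormFn n
  have h5 : Tendsto (fun n => ‖S n‖) atTop (𝓝 ‖hf.toLp f‖) := hS_tend.norm
  have h6 : ‖L‖ = ‖hf.toLp f‖ := tendsto_nhds_unique h4 h5
  rw [Lp.norm_def, Lp.norm_toLp f hf] at h6
  rw [eLpNorm_congr_ae hae]
  exact (ENNReal.toReal_eq_toReal_iff' (Lp.eLpNorm_ne_top L) hf.eLpNorm_ne_top).mp h6
end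

section
/- Let G be a compact group and X a separable Banach space with strictly convex dual X*. If T is a surjective linear isometry of C(G,X) commuting with all left translations, then there exist a surjective isometry U of X and y ∈ G such that (Tf)(s) = U(f(sy)) for all s ∈ G and all f ∈ C(G,X). -/
open Filter Topology Set
set_option linter.unusedSectionVars false
set_option maxHeartbeats 1000000
namespace IsomMultAux

variable {G : Type*} [Group G] [TopologicalSpace G] [IsTopologicalGroup G] [CompactSpace G]

noncomputable def Lt {X : Type*} [TopologicalSpace X] (t : G) (f : C(G, X)) : C(G, X) :=
  f.comp (ContinuousMap.mk (fun u => t * u) (by continuity))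

@[simp] lemma Lt_apply {X : Type*} [TopologicalSpace X] (t : G) (f : C(G, X)) (s : G) :
    Lt t f s = f (t * s) := rfl

lemma eval_eq_of_small {z : G} (h : ∀ V ∈ 𝓝 (1:G), z ∈ V) (k : C(G, ℝ)) (y : G) :
    k (y * z) = k y := by
  set d : C(G, ℝ) := k.comp (ContinuousMap.mk (fun u => y * u) (by continuity)) with hd
  have h1 : d 1 = k y := by simp [hd]
  have h2 : d z = k (y * z) := rfl
  rw [← h2, ← h1]
  by_contra hne
  have hδ : 0 < |d z - d 1| := abs_pos.2 (sub_ne_zero.2 hne)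
  have : {s | |d s - d 1| < |d z - d 1|} ∈ 𝓝 (1:G) := by
    have : Continuous fun s => |d s - d 1| := (d.continuous.sub continuous_const).abs
    have := this.isOpen_preimage (Iio (|d z - d 1|)) isOpen_Iio
    exact this.mem_nhds (by simp [hδ])
  exact absurd (h _ this) (by simp)

lemma exists_bump {W : Set G} (hW : W ∈ 𝓝 (1:G)) :
    ∃ b : C(G, ℝ), b 1 = 1 ∧ (∀ s, b s ∈ Icc (0:ℝ) 1) ∧ ∀ s, b s = 1 → s ∈ W := by
  obtain ⟨O, hOW, hO, h1O⟩ := mem_nhds_iff.1 hW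
  have hcl : closure ({1} : Set G) ⊆ O := by
    intro x hx
    have : {z : G | z⁻¹ * x ∈ O} ∈ 𝓝 x := by
      have : IsOpen {z : G | z⁻¹ * x ∈ O} :=
        hO.preimage (by continuity)
      exact this.mem_nhds (by simpa using h1O)
    rcases mem_closure_iff_nhds.1 hx _ this with ⟨z, hz1, hz2⟩
    simp only [mem_singleton_iff] at hz2
    subst hz2
    simpa using hz1
  obtain ⟨f, hf0, hf1, hficc⟩ :=
    exists_continuous_zero_one_of_isClosed isClosed_closure hO.isClosed_compl
      (disjoint_left.2 fun x hx hxc => hxc (hcl hx))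
  refine ⟨(1 : C(G,ℝ)) - f, ?_, ?_, ?_⟩
  · have : f 1 = 0 := hf0 (subset_closure rfl)
    simp [this]
  · intro s
    have := hficc s
    simp only [Set.mem_Icc] at this ⊢
    constructor <;> simp only [ContinuousMap.sub_apply, ContinuousMap.one_apply] <;> linarith [this.1, this.2]
  · intro s hs
    simp only [ContinuousMap.sub_apply, ContinuousMap.one_apply] at hs
    have hfs : f s = 0 := by linarith
    by_contra hsW
    have hsO : s ∉ O := fun h => hsW (hOW h)
    have := hf1 hsO
    simp only [Pi.one_apply] at this
    rw [hfs] at this; norm_num at this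

lemma exists_split {V : Set G} (hV : V ∈ 𝓝 (1:G)) :
    ∃ W ∈ 𝓝 (1:G), ∀ a b : G, a ∈ W → b ∈ W → a⁻¹ * b ∈ V := by
  have hc : Continuous fun p : G × G => p.1⁻¹ * p.2 := by continuity
  have h1 : (fun p : G × G => p.1⁻¹ * p.2) (1, 1) = 1 := by simp
  have hmem : (fun p : G × G => p.1⁻¹ * p.2) ⁻¹' V ∈ 𝓝 ((1:G), (1:G)) := by
    apply hc.continuousAt.preimage_mem_nhds
    simpa using hV
  rw [nhds_prod_eq, Filter.mem_prod_iff] at hmem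
  obtain ⟨A, hA, B, hB, hAB⟩ := hmem
  exact ⟨A ∩ B, inter_mem hA hB, fun a b ha hb => hAB (Set.mk_mem_prod ha.1 hb.2)⟩

theorem scalar_rep (ψ : C(G, ℝ) →ₗ[ℝ] ℝ)
    (hmax : ∀ g : C(G, ℝ), ∃ s, ψ g ≤ g s)
    (hone : ψ 1 = 1)
    (hkey : ∀ (g : C(G, ℝ)) (s : G), ∃ u : G, g s ≤ ψ (Lt u g)) :
    ∃ y : G, ∀ g : C(G, ℝ), ψ g = g y := by
  -- monotonicity
  have mono : ∀ g h : C(G, ℝ), (∀ s, g s ≤ h s) → ψ g ≤ ψ h := by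
    intro g h hgh
    obtain ⟨s, hs⟩ := hmax (g - h)
    have : ψ (g - h) ≤ 0 := le_trans hs (by simpa using sub_nonpos.2 (hgh s))
    have := map_sub ψ g h
    linarith [this ▸ ‹ψ (g - h) ≤ 0›]
  -- the family 𝒜
  set A : Set C(G, ℝ) := {g | (∀ s, 0 ≤ g s ∧ g s ≤ 1) ∧ ψ g = 1} with hA
  set Z : C(G, ℝ) → Set G := fun g => {s | g s = 1} with hZdef
  have hZclosed : ∀ g, IsClosed (Z g) := fun g =>
    isClosed_eq (map_continuous g) continuous_const
  have hZne : ∀ g ∈ A, (Z g).Nonempty := by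
    intro g hg
    obtain ⟨s, hs⟩ := hmax g
    exact ⟨s, le_antisymm ((hg.1 s).2) (hg.2 ▸ hs)⟩
  have honeA : (1 : C(G,ℝ)) ∈ A := ⟨fun s => by norm_num, hone⟩
  have hminA : ∀ g ∈ A, ∀ h ∈ A, (g ⊓ h) ∈ A ∧ Z (g ⊓ h) = Z g ∩ Z h := by
    intro g hg h hh
    have hb : ∀ s, 0 ≤ (g ⊓ h) s ∧ (g ⊓ h) s ≤ 1 := by
      intro s
      have := hg.1 s; have := hh.1 s
      simp only [ContinuousMap.inf_apply, le_inf_iff, inf_le_iff]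
      constructor
      · exact ⟨(hg.1 s).1, (hh.1 s).1⟩
      · exact Or.inl (hg.1 s).2
    have hle : ψ (g ⊓ h) ≤ 1 := by
      obtain ⟨s, hs⟩ := hmax (g ⊓ h)
      exact le_trans hs (hb s).2
    have hge : (1:ℝ) ≤ ψ (g ⊓ h) := by
      have hpt : ∀ s, (g + h - 1) s ≤ (g ⊓ h) s := by
        intro s
        have h1 := (hg.1 s).2; have h2 := (hh.1 s).2
        simp only [ContinuousMap.sub_apply, ContinuousMap.add_apply, ContinuousMap.one_apply,
          ContinuousMap.inf_apply, le_inf_iff]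
        constructor <;> linarith
      have := mono _ _ hpt
      have heq : ψ (g + h - 1) = 1 := by
        rw [map_sub, map_add, hone, hg.2, hh.2]; ring
      linarith
    have hmem : (g ⊓ h) ∈ A := ⟨hb, le_antisymm hle hge⟩
    refine ⟨hmem, ?_⟩
    ext s
    simp only [hZdef, mem_setOf_eq, mem_inter_iff, ContinuousMap.inf_apply]
    constructor
    · intro hs
      have h1 := (hg.1 s).2; have h2 := (hh.1 s).2
      constructor
      · by_contra hne
        have : g s < 1 := lt_of_le_of_ne h1 hne
        have : min (g s) (h s) < 1 := lt_of_le_of_lt (min_le_left _ _) this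
        rw [hs] at this; exact lt_irrefl _ this
      · by_contra hne
        have : h s < 1 := lt_of_le_of_ne h2 hne
        have : min (g s) (h s) < 1 := lt_of_le_of_lt (min_le_right _ _) this
        rw [hs] at this; exact lt_irrefl _ this
    · rintro ⟨h1, h2⟩; rw [h1, h2]; simp
  -- F is nonempty
  haveI : Nonempty A := ⟨⟨1, honeA⟩⟩
  have hdir : Directed (· ⊇ ·) (fun g : A => Z g.1) := by
    intro g h
    refine ⟨⟨g.1 ⊓ h.1, (hminA _ g.2 _ h.2).1⟩, ?_, ?_⟩ <;>
      · show Z _ ⊆ Z _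
        rw [(hminA _ g.2 _ h.2).2]
        first
          | exact inter_subset_left
          | exact inter_subset_right
  obtain ⟨y, hy⟩ := IsCompact.nonempty_iInter_of_directed_nonempty_isCompact_isClosed
    (fun g : A => Z g.1) hdir (fun g => hZne _ g.2)
    (fun g => (hZclosed _).isCompact) (fun g => hZclosed _)
  rw [mem_iInter] at hy
  -- annihilation
  have hann : ∀ (k : C(G, ℝ)) (U : Set G), IsOpen U → ((⋂ g : A, Z g.1) ⊆ U) →
      (∀ s, 0 ≤ k s) → (∀ s ∈ U, k s = 0) → ψ k = 0 := by
    intro k U hUopen hFU hk0 hkU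
    have hcompl : IsCompact Uᶜ := hUopen.isClosed_compl.isCompact
    have hempty : Uᶜ ∩ ⋂ g : A, Z g.1 = ∅ := by
      rw [Set.eq_empty_iff_forall_notMem]
      rintro s ⟨h1, h2⟩
      exact h1 (hFU h2)
    obtain ⟨t, ht⟩ := hcompl.elim_finite_subfamily_closed _ (fun g : A => hZclosed g.1) hempty
    classical
    have hfold : ∃ g ∈ A, Z g ⊆ ⋂ i ∈ t, Z (i : A).1 := by
      clear ht
      induction t using Finset.induction with
      | empty => exact ⟨1, honeA, by simp⟩
      | @insert a s ha ih =>
        obtain ⟨g, hgA, hgsub⟩ := ih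
        refine ⟨g ⊓ a.1, (hminA _ hgA _ a.2).1, ?_⟩
        rw [(hminA _ hgA _ a.2).2]
        intro u hu
        rw [Set.mem_iInter₂]
        intro i hi
        rcases Finset.mem_insert.1 hi with rfl | his
        · exact hu.2
        · exact Set.mem_iInter₂.1 (hgsub hu.1) i his
    obtain ⟨g, hgA, hgsub⟩ := hfold
    have hZU : Z g ⊆ U := by
      intro s hs
      by_contra hsU
      have : s ∈ Uᶜ ∩ ⋂ i ∈ t, Z (i : A).1 := ⟨hsU, hgsub hs⟩
      rw [ht] at this
      exact this
    obtain ⟨ε, hε, hεsub⟩ : ∃ ε > 0, ∀ s, 1 - ε ≤ g s → s ∈ U := by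
      by_contra hcon
      push_neg at hcon
      set C : ℕ → Set G := fun n => {s | 1 - 1/((n:ℝ)+1) ≤ g s} ∩ Uᶜ with hC
      have hCc : ∀ n, IsClosed (C n) := fun n =>
        (isClosed_le continuous_const (map_continuous g)).inter hUopen.isClosed_compl
      have hCne : ∀ n, (C n).Nonempty := by
        intro n
        obtain ⟨s, h1, h2⟩ := hcon (1/((n:ℝ)+1)) (by positivity)
        exact ⟨s, h1, h2⟩
      have hCmono : ∀ {m n : ℕ}, m ≤ n → C n ⊆ C m := by
        intro m n hmn s hs
        refine ⟨?_, hs.2⟩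
        have hmn' : ((m:ℝ)) + 1 ≤ ((n:ℝ)) + 1 := by
          have : ((m:ℝ)) ≤ (n:ℝ) := by exact_mod_cast hmn
          linarith
        have h1 : (1:ℝ)/((n:ℝ)+1) ≤ 1/((m:ℝ)+1) :=
          one_div_le_one_div_of_le (by positivity) hmn'
        have h2 := hs.1
        simp only [mem_setOf_eq] at h2 ⊢
        linarith
      have hCdir : Directed (· ⊇ ·) C := fun m n =>
        ⟨max m n, hCmono (le_max_left _ _), hCmono (le_max_right _ _)⟩
      obtain ⟨s, hsmem⟩ := IsCompact.nonempty_iInter_of_directed_nonempty_isCompact_isClosed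
        C hCdir hCne (fun n => (hCc n).isCompact) hCc
      rw [mem_iInter] at hsmem
      have hgs1 : (1:ℝ) ≤ g s := by
        have htend : Tendsto (fun n : ℕ => 1 - 1/((n:ℝ)+1)) atTop (𝓝 1) := by
          have h0 : Tendsto (fun n : ℕ => 1/((n:ℝ)+1)) atTop (𝓝 0) :=
            tendsto_one_div_add_atTop_nhds_zero_nat
          simpa using tendsto_const_nhds.sub h0
        exact le_of_tendsto' htend (fun n => (hsmem n).1)
      have : s ∈ Z g := le_antisymm ((hgA.1 s).2) hgs1
      exact (hsmem 0).2 (hZU this)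
    set h : C(G, ℝ) := (1 : C(G,ℝ)) ⊓ (ε⁻¹ • ((1:C(G,ℝ)) - g)) with hhdef
    have happly : ∀ s, h s = min 1 (ε⁻¹ * (1 - g s)) := by
      intro s; simp [hhdef]
    have hh0 : ∀ s, 0 ≤ h s := by
      intro s
      rw [happly]
      have := (hgA.1 s).2
      have hεinv : (0:ℝ) ≤ ε⁻¹ := by positivity
      exact le_min (by norm_num) (by nlinarith)
    have hkh : ∀ s, k s ≤ ‖k‖ * h s := by
      intro s
      by_cases hks : k s = 0
      · rw [hks]; exact mul_nonneg (norm_nonneg k) (hh0 s)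
      · have hsU : s ∉ U := fun hc => hks (hkU s hc)
        have hgs : g s < 1 - ε := by
          by_contra hge
          push_neg at hge
          exact hsU (hεsub s hge)
        have hh1 : h s = 1 := by
          rw [happly]
          have h5 : ε ≤ 1 - g s := by linarith
          have h6 : (1:ℝ) ≤ ε⁻¹ * (1 - g s) := by
            have := mul_le_mul_of_nonneg_left h5 (show (0:ℝ) ≤ ε⁻¹ by positivity)
            rwa [inv_mul_cancel₀ (ne_of_gt hε)] at this
          exact min_eq_left h6
        rw [hh1, mul_one]
        calc k s ≤ |k s| := le_abs_self _
          _ ≤ ‖k‖ := by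
              have := k.norm_coe_le_norm s
              simpa [Real.norm_eq_abs] using this
    have hψh : ψ h ≤ 0 := by
      have hpt : ∀ s, (ε • h) s ≤ ((1:C(G,ℝ)) - g) s := by
        intro s
        have hmin : h s ≤ ε⁻¹ * (1 - g s) := by rw [happly]; exact min_le_right _ _
        have := mul_le_mul_of_nonneg_left hmin hε.le
        simp only [ContinuousMap.smul_apply, smul_eq_mul, ContinuousMap.sub_apply,
          ContinuousMap.one_apply]
        calc ε * h s ≤ ε * (ε⁻¹ * (1 - g s)) := this
          _ = 1 - g s := by field_simp
      have hle := mono _ _ hpt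
      rw [map_smul, map_sub, hone, hgA.2] at hle
      simp only [smul_eq_mul, sub_self] at hle
      nlinarith
    have h0k : (0:ℝ) ≤ ψ k := by
      have := mono 0 k (fun s => by simpa using hk0 s)
      simpa using this
    have hup : ψ k ≤ ‖k‖ * ψ h := by
      have := mono k (‖k‖ • h) (fun s => by simpa using hkh s)
      rwa [map_smul, smul_eq_mul] at this
    have : ψ k ≤ 0 := le_trans hup (mul_nonpos_iff.2 (Or.inl ⟨norm_nonneg k, hψh⟩))
    linarith
  -- every point of F is inseparable from y
  have hsep : ∀ (k : C(G, ℝ)) (y' : G), (∀ i : A, y' ∈ Z i.1) → k y' = k y := by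
    intro k y' hy'
    have hz : ∀ V ∈ 𝓝 (1:G), y⁻¹ * y' ∈ V := by
      intro V hV
      obtain ⟨W, hW, hsplit⟩ := exists_split hV
      obtain ⟨b, hb1, hbicc, hbW⟩ := exists_bump hW
      obtain ⟨u, hu⟩ := hkey b 1
      rw [hb1] at hu
      have hLb : Lt u b ∈ A := by
        constructor
        · intro s
          simpa using ⟨(hbicc (u*s)).1, (hbicc (u*s)).2⟩
        · refine le_antisymm ?_ hu
          obtain ⟨s, hs⟩ := hmax (Lt u b)
          exact le_trans hs (hbicc (u*s)).2
      have h1 : b (u * y) = 1 := hy ⟨Lt u b, hLb⟩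
      have h2 : b (u * y') = 1 := hy' ⟨Lt u b, hLb⟩
      have hmem1 : u * y ∈ W := hbW _ h1
      have hmem2 : u * y' ∈ W := hbW _ h2
      have := hsplit _ _ hmem1 hmem2
      simpa [mul_assoc] using this
    have := eval_eq_of_small hz k y
    simpa using this
  refine ⟨y, ?_⟩
  intro k
  set c := k y with hc
  have hεbound : ∀ ε : ℝ, 0 < ε → |ψ k - c| ≤ ε := by
    intro ε hε
    set k₂ : C(G, ℝ) := ContinuousMap.mk (fun s => max (-ε) (min ε (k s - c)))
      (by exact (continuous_const.max ((continuous_const.min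
        ((map_continuous k).sub continuous_const))))) with hk₂
    set k₁ : C(G, ℝ) := k - c • (1:C(G,ℝ)) - k₂ with hk₁
    set U : Set G := {s | |k s - c| < ε} with hU
    have hUopen : IsOpen U :=
      isOpen_lt (((map_continuous k).sub continuous_const).abs) continuous_const
    have hFU : (⋂ g : A, Z g.1) ⊆ U := by
      intro y' hy'
      rw [mem_iInter] at hy'
      have : k y' = c := hsep k y' hy'
      simp [hU, this, hε]
    have hk₁U : ∀ s ∈ U, k₁ s = 0 := by
      intro s hs
      have habs : |k s - c| < ε := hs
      have h1 : k s - c ≤ ε := le_of_lt (lt_of_abs_lt habs)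
      have h2 : -ε ≤ k s - c := le_of_lt (neg_lt_of_abs_lt habs)
      have : k₂ s = k s - c := by
        simp only [hk₂, ContinuousMap.coe_mk]
        rw [min_eq_right h1, max_eq_right h2]
      simp only [hk₁, ContinuousMap.sub_apply, ContinuousMap.smul_apply,
        ContinuousMap.one_apply, smul_eq_mul, mul_one, this]
      ring
    have hψk₁ : ψ k₁ = 0 := by
      have hsplit : k₁ = (k₁ ⊔ 0) - ((-k₁) ⊔ 0) := by
        ext s
        simp only [ContinuousMap.sub_apply, ContinuousMap.sup_apply,
          ContinuousMap.zero_apply, ContinuousMap.neg_apply]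
        rcases le_total (k₁ s) 0 with h | h
        · rw [sup_eq_right.2 h, sup_eq_left.2 (by linarith : (0:ℝ) ≤ -k₁ s)]; ring
        · rw [sup_eq_left.2 h, sup_eq_right.2 (by linarith : -k₁ s ≤ (0:ℝ))]; ring
      have hψ1 : ψ (k₁ ⊔ 0) = 0 := by
        apply hann _ U hUopen hFU
        · intro s; simp [le_sup_right]
        · intro s hs
          simp only [ContinuousMap.sup_apply, ContinuousMap.zero_apply]
          rw [hk₁U s hs]; simp
      have hψ2 : ψ ((-k₁) ⊔ 0) = 0 := by
        apply hann _ U hUopen hFU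
        · intro s; simp [le_sup_right]
        · intro s hs
          simp only [ContinuousMap.sup_apply, ContinuousMap.zero_apply,
            ContinuousMap.neg_apply]
          rw [hk₁U s hs]; simp
      rw [hsplit, map_sub, hψ1, hψ2, sub_zero]
    have hdecomp : ψ k = c + ψ k₂ := by
      have : k = k₁ + c • (1:C(G,ℝ)) + k₂ := by rw [hk₁]; ring
      rw [this, map_add, map_add, hψk₁, map_smul, hone, smul_eq_mul, mul_one, zero_add]
    have hk₂ub : ψ k₂ ≤ ε := by
      have := mono k₂ (ε • (1:C(G,ℝ))) (by
        intro s
        simp only [hk₂, ContinuousMap.coe_mk, ContinuousMap.smul_apply,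
          ContinuousMap.one_apply, smul_eq_mul, mul_one]
        exact max_le (by linarith) (min_le_left _ _))
      rwa [map_smul, hone, smul_eq_mul, mul_one] at this
    have hk₂lb : -ε ≤ ψ k₂ := by
      have := mono ((-ε) • (1:C(G,ℝ))) k₂ (by
        intro s
        simp only [hk₂, ContinuousMap.coe_mk, ContinuousMap.smul_apply,
          ContinuousMap.one_apply, smul_eq_mul, mul_one]
        exact le_max_left _ _)
      rwa [map_smul, hone, smul_eq_mul, mul_one] at this
    rw [hdecomp]
    rw [abs_le]
    constructor <;> linarith
  by_contra hne
  have : ψ k ≠ c := hne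
  have habs : 0 < |ψ k - c| := abs_pos.2 (sub_ne_zero.2 this)
  have := hεbound (|ψ k - c|/2) (by linarith)
  linarith



variable {X : Type*} [NormedAddCommGroup X] [NormedSpace ℝ X]

theorem keyB {x : X} (hx : ‖x‖ = 1) {p : X →L[ℝ] ℝ} (hpx : p x = 1)
    (huniq : ∀ q : X →L[ℝ] ℝ, ‖q‖ ≤ 1 → q x = 1 → q = p)
    (v : X) (c : ℝ) (hc : ∀ r : ℝ, 0 < r → c ≤ (‖x + r • v‖ - 1)/r) : c ≤ p v := by
  set rn : ℕ → ℝ := fun n => (1/((n:ℝ)+1)) * (1/(1+‖v‖)) with hrn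
  have h1v : (0:ℝ) < 1 + ‖v‖ := by positivity
  have hrnpos : ∀ n, 0 < rn n := fun n => by positivity
  have hrnle : ∀ n, rn n * ‖v‖ < 1 := by
    intro n
    have h2 : rn n ≤ 1/(1+‖v‖) := by
      rw [hrn]
      have h3 : 1/((n:ℝ)+1) ≤ 1 := by
        rw [div_le_one (by positivity)]; simp
      nlinarith [one_div_pos.2 h1v]
    have : rn n * ‖v‖ ≤ (1/(1+‖v‖)) * ‖v‖ :=
      mul_le_mul_of_nonneg_right h2 (norm_nonneg v)
    have h4 : (1/(1+‖v‖)) * ‖v‖ < 1 := by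
      rw [div_mul_eq_mul_div, div_lt_one h1v]; linarith
    linarith
  have hrn0 : Tendsto rn atTop (𝓝 0) := by
    have h0 : Tendsto (fun n : ℕ => 1/((n:ℝ)+1)) atTop (𝓝 0) :=
      tendsto_one_div_add_atTop_nhds_zero_nat
    have := h0.mul_const (1/(1+‖v‖))
    simpa [hrn] using this
  have hlow : ∀ n, 1 - rn n * ‖v‖ ≤ ‖x + rn n • v‖ := by
    intro n
    have h5 := norm_sub_norm_le x (-(rn n • v))
    rw [sub_neg_eq_add, norm_neg, norm_smul, Real.norm_eq_abs,
      abs_of_pos (hrnpos n), hx] at h5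
    exact h5
  -- support functionals
  have hsel : ∀ n : ℕ, ∃ q : X →L[ℝ] ℝ, ‖q‖ = 1 ∧ q (x + rn n • v) = ‖x + rn n • v‖ := by
    intro n
    apply exists_dual_vector ℝ
    intro hzero
    have := hlow n
    rw [hzero] at this
    nlinarith [hrnle n]
  choose pn hpn1 hpnval using hsel
  -- basic estimates
  have hpnx_le : ∀ n, pn n x ≤ 1 := by
    intro n
    have := (pn n).le_opNorm x
    rw [hpn1, hx, one_mul] at this
    exact le_trans (le_abs_self _) (by simpa [Real.norm_eq_abs] using this)
  have hpnv_le : ∀ n, |pn n v| ≤ ‖v‖ := by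
    intro n
    have := (pn n).le_opNorm v
    rw [hpn1, one_mul] at this
    simpa [Real.norm_eq_abs] using this
  have hpnx_ge : ∀ n, 1 - 2 * (rn n * ‖v‖) ≤ pn n x := by
    intro n
    have hval := hpnval n
    rw [map_add, map_smul] at hval
    have h6 : pn n x = ‖x + rn n • v‖ - rn n * pn n v := by
      simp only [smul_eq_mul] at hval
      linarith
    have h7 : rn n * pn n v ≤ rn n * ‖v‖ :=
      mul_le_mul_of_nonneg_left (le_trans (le_abs_self _) (hpnv_le n)) (hrnpos n).le
    have := hlow n
    rw [h6]
    nlinarith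
  have hpnx_tend : Tendsto (fun n => pn n x) atTop (𝓝 1) := by
    have hlo : Tendsto (fun n => 1 - 2 * (rn n * ‖v‖)) atTop (𝓝 1) := by
      have := (hrn0.mul_const ‖v‖).const_mul 2
      have h2 := tendsto_const_nhds (x := (1:ℝ)) (f := atTop (α := ℕ))
      have h3 := h2.sub this
      simp only [sub_zero, mul_zero, zero_mul] at h3
      convert h3 using 2 with n
    exact tendsto_of_tendsto_of_tendsto_of_le_of_le hlo tendsto_const_nhds
      (fun n => hpnx_ge n) (fun n => hpnx_le n)
  -- c ≤ pn n v
  have hcpn : ∀ n, c ≤ pn n v := by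
    intro n
    have h8 := hc (rn n) (hrnpos n)
    have hval := hpnval n
    rw [map_add, map_smul] at hval
    simp only [smul_eq_mul] at hval
    have h9 : (‖x + rn n • v‖ - 1)/(rn n) = (pn n x - 1)/(rn n) + pn n v := by
      rw [← hval, add_sub_right_comm, add_div, mul_div_cancel_left₀ _ (hrnpos n).ne']
    have h10 : (pn n x - 1)/(rn n) ≤ 0 :=
      div_nonpos_of_nonpos_of_nonneg (by linarith [hpnx_le n]) (hrnpos n).le
    rw [h9] at h8
    linarith
  -- weak-* cluster point
  set S : Set (WeakDual ℝ X) :=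
    WeakDual.toStrongDual ⁻¹' Metric.closedBall (0 : StrongDual ℝ X) 1 with hS
  have hScomp : IsCompact S := WeakDual.isCompact_closedBall (𝕜 := ℝ) (E := X) 0 1
  set F : Filter (WeakDual ℝ X) :=
    Filter.map (fun n => StrongDual.toWeakDual (pn n)) atTop with hF
  haveI : F.NeBot := Filter.map_neBot
  have hFS : F ≤ Filter.principal S := by
    rw [hF, Filter.le_principal_iff, Filter.mem_map]
    apply Filter.Eventually.of_forall
    intro n
    show StrongDual.toWeakDual (pn n) ∈ S
    rw [hS, Set.mem_preimage, mem_closedBall_zero_iff]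
    show ‖pn n‖ ≤ 1
    rw [hpn1]
  obtain ⟨q, hqS, hq⟩ := hScomp.exists_clusterPt hFS
  -- q evaluated at x is 1
  have heval : ∀ w : X, ClusterPt (q w) (Filter.map (fun n => pn n w) atTop) := by
    intro w
    have hcont : Continuous fun q' : WeakDual ℝ X => q' w := WeakDual.eval_continuous w
    have := hq.map hcont.continuousAt (Filter.tendsto_map (f := fun q' : WeakDual ℝ X => q' w))
    rw [hF, Filter.map_map] at this
    exact this
  have hqx : q x = 1 := by
    have h1 : Filter.map (fun n => pn n x) atTop ≤ 𝓝 1 := hpnx_tend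
    exact eq_of_nhds_neBot ((heval x).mono h1)
  have hqvc : c ≤ q v := by
    have h1 : Filter.map (fun n => pn n v) atTop ≤ Filter.principal (Ici c) := by
      rw [Filter.le_principal_iff, Filter.mem_map]
      exact Filter.Eventually.of_forall fun n => hcpn n
    have h2 := (heval v).mono h1
    have := mem_closure_iff_clusterPt.2 h2
    rwa [isClosed_Ici.closure_eq] at this
  -- identify q with p
  have hqnorm : ‖WeakDual.toStrongDual q‖ ≤ 1 := by
    have := hqS
    rw [hS, Set.mem_preimage, mem_closedBall_zero_iff] at this
    exact this
  have hqp : WeakDual.toStrongDual q = p := huniq _ hqnorm hqx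
  have : (WeakDual.toStrongDual q) v = q v := rfl
  rw [← hqp, this]
  exact hqvc


theorem key1 (Λ : C(G, X) →ₗ[ℝ] X) (hΛ : ∀ f : C(G, X), ‖Λ f‖ ≤ ‖f‖)
    (hconst : ∀ z : X, Λ (ContinuousMap.const G z) = z)
    {x : X} (hx : ‖x‖ = 1) {p : X →L[ℝ] ℝ} (hpx : p x = 1) (hp : ‖p‖ ≤ 1)
    (huniq : ∀ q : X →L[ℝ] ℝ, ‖q‖ ≤ 1 → q x = 1 → q = p)
    (f : C(G, X)) : ∃ s : G, p (Λ f) ≤ p (f s) := by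
  have hple : ∀ z : X, p z ≤ ‖z‖ := by
    intro z
    have := p.le_opNorm z
    have h2 : ‖p‖ * ‖z‖ ≤ ‖z‖ := by
      nlinarith [norm_nonneg z]
    exact le_trans (le_trans (le_abs_self _) (by simpa [Real.norm_eq_abs] using this)) h2
  -- step 1: for every r > 0 there is a maximizer s with p (Λ f) ≤ (‖x + r • f s‖ - 1)/r
  have step1 : ∀ r : ℝ, 0 < r → ∃ s : G, (∀ u : G, ‖x + r • f u‖ ≤ ‖x + r • f s‖) ∧
      p (Λ f) ≤ (‖x + r • f s‖ - 1)/r := by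
    intro r hr
    set Fr : C(G, X) := ContinuousMap.const G x + r • f with hFr
    have hFrapp : ∀ u, Fr u = x + r • f u := fun u => rfl
    obtain ⟨s, -, hs⟩ := IsCompact.exists_isMaxOn (isCompact_univ (X := G)) univ_nonempty
      ((map_continuous Fr).norm.continuousOn (s := univ))
    have hmax : ∀ u : G, ‖x + r • f u‖ ≤ ‖x + r • f s‖ := fun u => hs (mem_univ u)
    refine ⟨s, hmax, ?_⟩
    have hnorm : ‖Fr‖ ≤ ‖x + r • f s‖ := by
      rw [ContinuousMap.norm_le _ (norm_nonneg _)]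
      intro u
      exact hmax u
    have hlin : Λ Fr = x + r • Λ f := by
      rw [hFr, map_add, map_smul, hconst]
    have h3 : p (Λ Fr) = 1 + r * p (Λ f) := by
      rw [hlin, map_add, map_smul, hpx]
      simp
    have h4 : p (Λ Fr) ≤ ‖x + r • f s‖ :=
      le_trans (hple _) (le_trans (hΛ _) hnorm)
    rw [h3] at h4
    rw [le_div_iff₀ hr]
    nlinarith
  -- monotonicity of difference quotients
  have monoq : ∀ (v : X) (r r' : ℝ), 0 < r → r ≤ r' →
      (‖x + r • v‖ - 1)/r ≤ (‖x + r' • v‖ - 1)/r' := by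
    intro v r r' hr hrr
    have hr' : 0 < r' := lt_of_lt_of_le hr hrr
    set a : ℝ := r / r' with ha
    have ha0 : 0 < a := div_pos hr hr'
    have ha1 : a ≤ 1 := (div_le_one hr').2 hrr
    have hdecomp : x + r • v = (1 - a) • x + a • (x + r' • v) := by
      rw [smul_add, ← add_assoc, ← add_smul, sub_add_cancel, one_smul, smul_smul]
      congr 2
      rw [ha]
      field_simp
    have hnb : ‖x + r • v‖ ≤ (1 - a) + a * ‖x + r' • v‖ := by
      rw [hdecomp]
      calc ‖(1 - a) • x + a • (x + r' • v)‖ ≤ ‖(1-a) • x‖ + ‖a • (x + r' • v)‖ :=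
            norm_add_le _ _
        _ = (1 - a) + a * ‖x + r' • v‖ := by
            rw [norm_smul, norm_smul, Real.norm_eq_abs, Real.norm_eq_abs,
              abs_of_nonneg (by linarith), abs_of_pos ha0, hx, mul_one]
    have key : (‖x + r • v‖ - 1) ≤ a * (‖x + r' • v‖ - 1) := by
      have h8 : a * (‖x + r' • v‖ - 1) = a * ‖x + r' • v‖ - a := by ring
      rw [h8]
      linarith
    rw [div_le_div_iff₀ hr hr']
    have har : a * r' = r := by rw [ha]; field_simp
    calc (‖x + r • v‖ - 1) * r' ≤ a * (‖x + r' • v‖ - 1) * r' :=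
          mul_le_mul_of_nonneg_right key hr'.le
      _ = (‖x + r' • v‖ - 1) * (a * r') := by ring
      _ = (‖x + r' • v‖ - 1) * r := by rw [har]
  -- sequence of maximizers
  set rn : ℕ → ℝ := fun n => 1/((n:ℝ)+1) with hrn
  have hrnpos : ∀ n, 0 < rn n := fun n => by positivity
  choose sn hsn1 hsn2 using fun n => step1 (rn n) (hrnpos n)
  -- cluster point
  set Fs : Filter G := Filter.map sn atTop with hFs
  haveI : Fs.NeBot := Filter.map_neBot
  obtain ⟨s₀, hs₀⟩ := exists_clusterPt_of_compactSpace Fs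
  have hcluster : ∀ r : ℝ, 0 < r → p (Λ f) ≤ (‖x + r • f s₀‖ - 1)/r := by
    intro r hr
    set Cr : Set G := {s : G | p (Λ f) ≤ (‖x + r • f s‖ - 1)/r} with hCr
    have hCrclosed : IsClosed Cr := by
      apply isClosed_le continuous_const
      apply Continuous.div_const
      exact (((continuous_const.add ((map_continuous f).const_smul r)).norm).sub
        continuous_const)
    have hmem : ∀ᶠ n in atTop, sn n ∈ Cr := by
      obtain ⟨N, hN⟩ := exists_nat_gt (1/r)
      rw [Filter.eventually_atTop]
      refine ⟨N, fun n hn => ?_⟩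
      have hrnr : rn n ≤ r := by
        rw [hrn]
        rw [div_le_iff₀ (by positivity)]
        have h5 : (1:ℝ)/r < (N:ℝ) := hN
        have h6 : (N:ℝ) ≤ (n:ℝ) := by exact_mod_cast hn
        have h7 : (1:ℝ)/r < (n:ℝ) + 1 := by linarith
        rw [div_lt_iff₀ (by positivity)] at h7
        nlinarith
      exact le_trans (hsn2 n) (monoq (f (sn n)) (rn n) r (hrnpos n) hrnr)
    have hle : Fs ≤ Filter.principal Cr := by
      rw [hFs, Filter.le_principal_iff, Filter.mem_map]
      exact hmem
    have := mem_closure_iff_clusterPt.2 (hs₀.mono hle)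
    rwa [hCrclosed.closure_eq] at this
  exact ⟨s₀, keyB hx hpx huniq (f s₀) (p (Λ f)) hcluster⟩



lemma norm_const' (z : X) : ‖ContinuousMap.const G z‖ = ‖z‖ :=
  le_antisymm ((ContinuousMap.norm_le _ (norm_nonneg z)).2 fun _ => le_refl _)
    ((ContinuousMap.const G z).norm_coe_le_norm 1)

lemma support_uniq [StrictConvexSpace ℝ (StrongDual ℝ X)] {x : X} (hx : ‖x‖ = 1)
    {p q : X →L[ℝ] ℝ} (hp : ‖p‖ ≤ 1) (hpx : p x = 1) (hq : ‖q‖ ≤ 1) (hqx : q x = 1) :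
    q = p := by
  have hbound : ∀ r : X →L[ℝ] ℝ, r x = 1 → 1 ≤ ‖r‖ := by
    intro r hrx
    have := r.le_opNorm x
    rw [hrx, hx, mul_one] at this
    simpa using this
  have hpn : ‖p‖ = 1 := le_antisymm hp (hbound p hpx)
  have hqn : ‖q‖ = 1 := le_antisymm hq (hbound q hqx)
  have hsum : ‖q + p‖ = 2 := by
    refine le_antisymm ?_ ?_
    · calc ‖q + p‖ ≤ ‖q‖ + ‖p‖ := norm_add_le _ _
        _ = 2 := by rw [hpn, hqn]; norm_num
    · have h2 : (q + p) x = 2 := by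
        simp [hqx, hpx]
        norm_num
      have := (q + p).le_opNorm x
      rw [h2, hx, mul_one] at this
      simpa using this
  have hQ : (q : StrongDual ℝ X) = (p : StrongDual ℝ X) := by
    apply eq_of_norm_eq_of_norm_add_eq
    · show ‖q‖ = ‖p‖
      rw [hpn, hqn]
    · show ‖q + p‖ = ‖q‖ + ‖p‖
      rw [hsum, hpn, hqn]; norm_num
  exact hQ

/-- `g ⊗ x` -/
noncomputable def tens (x : X) : C(G, ℝ) →ₗ[ℝ] C(G, X) where
  toFun g := ContinuousMap.mk (fun s => g s • x) ((map_continuous g).smul continuous_const)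
  map_add' g h := by ext s; simp [add_smul]
  map_smul' c g := by ext s; simp [mul_smul]

@[simp] lemma tens_apply (x : X) (g : C(G, ℝ)) (s : G) : tens x g s = g s • x := rfl

end IsomMultAux


open IsomMultAux

/-- **Theorem 7.** If `G` is a compact group and `X*` is strictly convex, every isometric
invertible left multiplier of `C(G,X)` is of the form `(Tf)(s) = U(f(sy))`. -/
theorem isometric_multiplier_C
    {G : Type*} [Group G] [TopologicalSpace G] [IsTopologicalGroup G] [CompactSpace G]
    {X : Type*} [NormedAddCommGroup X] [NormedSpace ℝ X] [CompleteSpace X]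
    [TopologicalSpace.SeparableSpace X]
    [StrictConvexSpace ℝ (StrongDual ℝ X)]
    (T : C(G, X) ≃ₗᵢ[ℝ] C(G, X))
    -- `T` commutes with all left translations `(L_t f)(s) = f(ts)` :
    (hT : ∀ (t : G) (f : C(G, X)) (s : G),
      T (f.comp (ContinuousMap.mk (fun u => t * u) (by continuity))) s = T f (t * s)) :
    ∃ (U : X ≃ₗᵢ[ℝ] X) (y : G), ∀ (f : C(G, X)) (s : G), T f s = U (f (s * y)) := by
  classical
  obtain hX | hX := subsingleton_or_nontrivial X
  · exact ⟨LinearIsometryEquiv.refl ℝ X, 1, fun f s => Subsingleton.elim _ _⟩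
  -- T commutes with left translations, as an equation of functions
  have hTL : ∀ (t : G) (f : C(G, X)), T (Lt t f) = Lt t (T f) := by
    intro t f
    ext s
    exact hT t f s
  have hTsymmL : ∀ (t : G) (f : C(G, X)), T.symm (Lt t f) = Lt t (T.symm f) := by
    intro t f
    have h1 := hTL t (T.symm f)
    rw [T.apply_symm_apply] at h1
    rw [← h1, T.symm_apply_apply]
  -- T maps constants to constants
  have hconst_gen : ∀ (S : C(G, X) ≃ₗᵢ[ℝ] C(G, X)),
      (∀ (t : G) (f : C(G, X)), S (Lt t f) = Lt t (S f)) →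
      ∀ z : X, S (ContinuousMap.const G z) =
        ContinuousMap.const G (S (ContinuousMap.const G z) 1) := by
    intro S hS z
    ext t
    have h2 : Lt t (ContinuousMap.const G z) = ContinuousMap.const G z := by ext; rfl
    have h3 := congrArg (fun F : C(G, X) => F 1) (hS t (ContinuousMap.const G z))
    simp only [h2, Lt_apply, mul_one] at h3
    simpa using h3.symm
  have hconstT := hconst_gen T hTL
  have hconstTsymm := hconst_gen T.symm hTsymmL
  -- the isometry U₀
  set U₀ : X ≃ₗᵢ[ℝ] X :=
  { toFun := fun z => T (ContinuousMap.const G z) 1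
    invFun := fun z => T.symm (ContinuousMap.const G z) 1
    map_add' := by
      intro a b
      show T (ContinuousMap.const G (a + b)) 1 =
        T (ContinuousMap.const G a) 1 + T (ContinuousMap.const G b) 1
      have h9 : ContinuousMap.const G (a + b) =
          ContinuousMap.const G a + ContinuousMap.const G b := by ext; rfl
      rw [h9, map_add]
      rfl
    map_smul' := by
      intro c a
      show T (ContinuousMap.const G (c • a)) 1 = c • T (ContinuousMap.const G a) 1
      have h9 : ContinuousMap.const G (c • a) = c • ContinuousMap.const G a := by ext; rfl
      rw [h9, map_smul]
      rfl
    left_inv := by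
      intro z
      show T.symm (ContinuousMap.const G (T (ContinuousMap.const G z) 1)) 1 = z
      rw [← hconstT z, T.symm_apply_apply]
      rfl
    right_inv := by
      intro z
      show T (ContinuousMap.const G (T.symm (ContinuousMap.const G z) 1)) 1 = z
      rw [← hconstTsymm z, T.apply_symm_apply]
      rfl
    norm_map' := by
      intro z
      show ‖T (ContinuousMap.const G z) 1‖ = ‖z‖
      calc ‖T (ContinuousMap.const G z) 1‖
          = ‖ContinuousMap.const G (T (ContinuousMap.const G z) 1)‖ := (norm_const' _).symm
        _ = ‖T (ContinuousMap.const G z)‖ := by rw [← hconstT z]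
        _ = ‖ContinuousMap.const G z‖ := T.norm_map _
        _ = ‖z‖ := norm_const' z } with hU₀def
  have hU₀ : ∀ z : X, U₀ z = T (ContinuousMap.const G z) 1 := fun z => rfl
  have hU₀symm : ∀ z : X, U₀.symm z = T.symm (ContinuousMap.const G z) 1 := fun z => rfl
  -- Λ and Γ
  set Λ : C(G, X) →ₗ[ℝ] X :=
  { toFun := fun f => U₀.symm (T f 1)
    map_add' := by
      intro a b
      show U₀.symm (T (a + b) 1) = U₀.symm (T a 1) + U₀.symm (T b 1)
      rw [map_add]
      show U₀.symm (T a 1 + T b 1) = _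
      rw [map_add]
    map_smul' := by
      intro c a
      show U₀.symm (T (c • a) 1) = c • U₀.symm (T a 1)
      rw [map_smul]
      show U₀.symm (c • T a 1) = _
      rw [map_smul] } with hΛdef
  set Γ : C(G, X) →ₗ[ℝ] X :=
  { toFun := fun f => U₀ (T.symm f 1)
    map_add' := by
      intro a b
      show U₀ (T.symm (a + b) 1) = U₀ (T.symm a 1) + U₀ (T.symm b 1)
      rw [map_add]
      show U₀ (T.symm a 1 + T.symm b 1) = _
      rw [map_add]
    map_smul' := by
      intro c a
      show U₀ (T.symm (c • a) 1) = c • U₀ (T.symm a 1)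
      rw [map_smul]
      show U₀ (c • T.symm a 1) = _
      rw [map_smul] } with hΓdef
  have hΛ : ∀ f : C(G, X), Λ f = U₀.symm (T f 1) := fun f => rfl
  have hΓ : ∀ f : C(G, X), Γ f = U₀ (T.symm f 1) := fun f => rfl
  have hΛnorm : ∀ f : C(G, X), ‖Λ f‖ ≤ ‖f‖ := by
    intro f
    rw [hΛ, U₀.symm.norm_map]
    calc ‖T f 1‖ ≤ ‖T f‖ := (T f).norm_coe_le_norm 1
      _ = ‖f‖ := T.norm_map f
  have hΓnorm : ∀ f : C(G, X), ‖Γ f‖ ≤ ‖f‖ := by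
    intro f
    rw [hΓ, U₀.norm_map]
    calc ‖T.symm f 1‖ ≤ ‖T.symm f‖ := (T.symm f).norm_coe_le_norm 1
      _ = ‖f‖ := T.symm.norm_map f
  have hΛconst : ∀ z : X, Λ (ContinuousMap.const G z) = z := by
    intro z
    rw [hΛ, ← hU₀ z, LinearIsometryEquiv.symm_apply_apply]
  have hΓconst : ∀ z : X, Γ (ContinuousMap.const G z) = z := by
    intro z
    rw [hΓ, ← hU₀symm z, LinearIsometryEquiv.apply_symm_apply]
  have hΛeval : ∀ (f : C(G, X)) (s : G), T f s = U₀ (Λ (Lt s f)) := by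
    intro f s
    rw [hΛ, LinearIsometryEquiv.apply_symm_apply]
    have := hT s f 1
    rw [mul_one] at this
    exact this.symm
  have hΓeval : ∀ (f : C(G, X)) (s : G), Γ (Lt s (T f)) = U₀ (f s) := by
    intro f s
    rw [hΓ, hTsymmL, T.symm_apply_apply]
    show U₀ (f (s * 1)) = U₀ (f s)
    rw [mul_one]
  -- representation for every unit vector
  have hAll : ∀ x : X, ‖x‖ = 1 → ∃ (p : X →L[ℝ] ℝ) (y : G), ‖p‖ = 1 ∧ p x = 1 ∧
      (∀ q : X →L[ℝ] ℝ, ‖q‖ ≤ 1 → q x = 1 → q = p) ∧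
      ∀ f : C(G, X), p (Λ f) = p (f y) := by
    intro x hx
    obtain ⟨p, hp1, hpx⟩ := exists_dual_vector ℝ x (by
      intro h0
      rw [h0] at hx
      norm_num at hx)
    rw [hx] at hpx
    norm_num at hpx
    have huniq : ∀ q : X →L[ℝ] ℝ, ‖q‖ ≤ 1 → q x = 1 → q = p :=
      fun q hq hqx => support_uniq hx (le_of_eq hp1) hpx hq hqx
    -- the scalar functional
    set ψ : C(G, ℝ) →ₗ[ℝ] ℝ := p.toLinearMap.comp (Λ.comp (tens x)) with hψdef
    have hψ : ∀ g : C(G, ℝ), ψ g = p (Λ (tens x g)) := fun g => rfl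
    have htensconst : tens x (1 : C(G,ℝ)) = ContinuousMap.const G x := by
      ext s; simp
    have hmaxψ : ∀ g : C(G, ℝ), ∃ s, ψ g ≤ g s := by
      intro g
      obtain ⟨s, hs⟩ := key1 Λ hΛnorm hΛconst hx hpx (le_of_eq hp1) huniq (tens x g)
      refine ⟨s, ?_⟩
      rw [hψ]
      have : p (tens x g s) = g s := by
        rw [tens_apply, map_smul, hpx, smul_eq_mul, mul_one]
      rwa [this] at hs
    have honeψ : ψ 1 = 1 := by
      rw [hψ, htensconst, hΛconst, hpx]
    -- properties of the conjugated functional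
    set p' : X →L[ℝ] ℝ := p.comp U₀.symm.toLinearIsometry.toContinuousLinearMap with hp'def
    have hp'app : ∀ z, p' z = p (U₀.symm z) := fun z => rfl
    have hp'norm : ‖p'‖ ≤ 1 := by
      apply ContinuousLinearMap.opNorm_le_bound _ zero_le_one
      intro z
      rw [hp'app, one_mul]
      calc ‖p (U₀.symm z)‖ ≤ ‖p‖ * ‖U₀.symm z‖ := p.le_opNorm _
        _ = ‖z‖ := by rw [hp1, one_mul, U₀.symm.norm_map]
    have hx' : ‖U₀ x‖ = 1 := by rw [U₀.norm_map]; exact hx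
    have hp'x' : p' (U₀ x) = 1 := by
      rw [hp'app, LinearIsometryEquiv.symm_apply_apply, hpx]
    have huniq' : ∀ q : X →L[ℝ] ℝ, ‖q‖ ≤ 1 → q (U₀ x) = 1 → q = p' := by
      intro q hq hqx
      set q₀ : X →L[ℝ] ℝ := q.comp U₀.toLinearIsometry.toContinuousLinearMap with hq₀def
      have hq₀app : ∀ z, q₀ z = q (U₀ z) := fun z => rfl
      have hq₀norm : ‖q₀‖ ≤ 1 := by
        apply ContinuousLinearMap.opNorm_le_bound _ zero_le_one
        intro z
        rw [hq₀app, one_mul]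
        calc ‖q (U₀ z)‖ ≤ ‖q‖ * ‖U₀ z‖ := q.le_opNorm _
          _ ≤ 1 * ‖U₀ z‖ := by
              apply mul_le_mul_of_nonneg_right hq (norm_nonneg _)
          _ = ‖z‖ := by rw [one_mul, U₀.norm_map]
      have hq₀x : q₀ x = 1 := by rw [hq₀app]; exact hqx
      have := huniq q₀ hq₀norm hq₀x
      ext z
      rw [hp'app, ← this, hq₀app, LinearIsometryEquiv.apply_symm_apply]
    have hkeyψ : ∀ (g : C(G, ℝ)) (s : G), ∃ u : G, g s ≤ ψ (Lt u g) := by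
      intro g s
      set f : C(G, X) := tens x g with hfdef
      obtain ⟨t, ht⟩ := key1 Γ hΓnorm hΓconst hx' hp'x' hp'norm huniq' (Lt s (T f))
      refine ⟨s * t, ?_⟩
      have hLHS : p' (Γ (Lt s (T f))) = g s := by
        rw [hΓeval, hp'app, LinearIsometryEquiv.symm_apply_apply]
        show p (g s • x) = g s
        rw [map_smul, hpx, smul_eq_mul, mul_one]
      have hRHS : p' ((Lt s (T f)) t) = ψ (Lt (s * t) g) := by
        have h4 : (Lt s (T f)) t = T f (s * t) := rfl
        rw [h4, hΛeval f (s * t), hp'app, LinearIsometryEquiv.symm_apply_apply, hψ]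
        congr 1
      rw [hLHS, hRHS] at ht
      exact ht
    obtain ⟨y, hy⟩ := scalar_rep ψ hmaxψ honeψ hkeyψ
    refine ⟨p, y, hp1, hpx, huniq, ?_⟩
    -- factorization through the scalar functional
    intro f
    set g : C(G, ℝ) := ContinuousMap.mk (fun s => p (f s))
      (p.continuous.comp (map_continuous f)) with hgdef
    set h0 : C(G, X) := f - tens x g with hh0def
    have hph0 : ∀ s, p (h0 s) = 0 := by
      intro s
      show p (f s - g s • x) = 0
      rw [map_sub, map_smul, hpx, smul_eq_mul, mul_one]
      show p (f s) - g s = 0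
      rw [hgdef]
      simp
    have hΛh0 : p (Λ h0) = 0 := by
      obtain ⟨s1, hs1⟩ := key1 Λ hΛnorm hΛconst hx hpx (le_of_eq hp1) huniq h0
      obtain ⟨s2, hs2⟩ := key1 Λ hΛnorm hΛconst hx hpx (le_of_eq hp1) huniq (-h0)
      rw [hph0 s1] at hs1
      have : p ((-h0) s2) = 0 := by
        show p (-(h0 s2)) = 0
        rw [map_neg, hph0 s2, neg_zero]
      rw [this, map_neg, map_neg] at hs2
      linarith
    have hsplit : f = h0 + tens x g := by rw [hh0def, sub_add_cancel]
    have hgy : p (Λ (tens x g)) = g y := by rw [← hψ]; exact hy g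
    rw [hsplit, map_add, map_add, hΛh0, zero_add, hgy]
    show g y = p ((h0 + tens x g) y)
    have : (h0 + tens x g) y = h0 y + g y • x := rfl
    rw [this, map_add, hph0 y, zero_add, map_smul, hpx, smul_eq_mul, mul_one]
  -- fix a unit vector and its point
  obtain ⟨z0, hz0⟩ := exists_ne (0 : X)
  set x₀ : X := ‖z0‖⁻¹ • z0 with hx₀def
  have hz0n : (0:ℝ) < ‖z0‖ := norm_pos_iff.2 hz0
  have hx₀ : ‖x₀‖ = 1 := by
    rw [hx₀def, norm_smul, Real.norm_eq_abs, abs_of_pos (inv_pos.2 hz0n)]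
    exact inv_mul_cancel₀ (ne_of_gt hz0n)
  obtain ⟨p₀, y₀, hp₀1, hp₀x, huniq₀, hrep₀⟩ := hAll x₀ hx₀
  -- the main claim : Λ f = f y₀ for all f
  have hmain : ∀ f : C(G, X), Λ f = f y₀ := by
    intro f
    by_contra hne
    set v : X := Λ f - f y₀ with hvdef
    have hv : v ≠ 0 := sub_ne_zero.2 hne
    set xv : X := ‖v‖⁻¹ • v with hxvdef
    have hvn : (0:ℝ) < ‖v‖ := norm_pos_iff.2 hv
    have hxv : ‖xv‖ = 1 := by
      rw [hxvdef, norm_smul, Real.norm_eq_abs, abs_of_pos (inv_pos.2 hvn)]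
      exact inv_mul_cancel₀ (ne_of_gt hvn)
    obtain ⟨p, y, hp1, hpx, huniq, hrep⟩ := hAll xv hxv
    have hpv : p v = ‖v‖ := by
      have hveq : v = ‖v‖ • xv := by
        rw [hxvdef, smul_smul]
        rw [mul_inv_cancel₀ (norm_ne_zero_iff.2 hv), one_smul]
      have h9 : p (‖v‖ • xv) = ‖v‖ := by
        rw [map_smul, hpx, smul_eq_mul, mul_one]
      rw [← h9]
      congr 1
    have hfinal : p (f y) = p (f y₀) → False := by
      intro heq
      have h5 : p v = 0 := by
        rw [hvdef, map_sub, hrep f, heq, sub_self]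
      rw [hpv] at h5
      exact (norm_ne_zero_iff.2 hv) h5
    by_cases hsame : ∀ f' : C(G, X), p (f' y) = p (f' y₀)
    · exact hfinal (hsame f)
    · push_neg at hsame
      obtain ⟨f₀, hf₀⟩ := hsame
      -- build a separating function
      set k : C(G, ℝ) := ContinuousMap.mk (fun s => p (f₀ s))
        (p.continuous.comp (map_continuous f₀)) with hkdef
      have hky : k y ≠ k y₀ := by
        simpa [hkdef] using hf₀
      set d : ℝ := k y - k y₀ with hddef
      have hd : d ≠ 0 := sub_ne_zero.2 hky
      set k' : C(G, ℝ) := d⁻¹ • (k - ContinuousMap.const G (k y₀)) with hk'def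
      have hk'y : k' y = 1 := by
        simp [hk'def, hddef]
        rw [inv_mul_cancel₀ hd]
      have hk'y₀ : k' y₀ = 0 := by simp [hk'def]
      set k'' : C(G, ℝ) := (0 : C(G,ℝ)) ⊔ (k' ⊓ 1) with hk''def
      have hk''app : ∀ s, k'' s = max 0 (min (k' s) 1) := fun s => rfl
      have hk''y : k'' y = 1 := by rw [hk''app, hk'y]; norm_num
      have hk''y₀ : k'' y₀ = 0 := by rw [hk''app, hk'y₀]; norm_num
      have hk''icc : ∀ s, 0 ≤ k'' s ∧ k'' s ≤ 1 := by
        intro s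
        rw [hk''app]
        constructor
        · exact le_max_left _ _
        · exact max_le (by norm_num) (min_le_right _ _)
      set F : C(G, X) := tens xv k'' + tens x₀ ((1 : C(G,ℝ)) - k'') with hFdef
      have hFy : F y = xv := by
        show k'' y • xv + (1 - k'' y) • x₀ = xv
        rw [hk''y]
        simp
      have hFy₀ : F y₀ = x₀ := by
        show k'' y₀ • xv + (1 - k'' y₀) • x₀ = x₀
        rw [hk''y₀]
        simp
      have hFnorm : ‖F‖ ≤ 1 := by
        rw [ContinuousMap.norm_le _ zero_le_one]
        intro s
        show ‖k'' s • xv + (1 - k'' s) • x₀‖ ≤ 1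
        have h1 : ‖k'' s • xv‖ = k'' s := by
          rw [norm_smul, hxv, mul_one, Real.norm_eq_abs, abs_of_nonneg (hk''icc s).1]
        have h2 : ‖(1 - k'' s) • x₀‖ = 1 - k'' s := by
          rw [norm_smul, hx₀, mul_one, Real.norm_eq_abs,
            abs_of_nonneg (by linarith [(hk''icc s).2] : (0:ℝ) ≤ 1 - k'' s)]
        calc ‖k'' s • xv + (1 - k'' s) • x₀‖
            ≤ ‖k'' s • xv‖ + ‖(1 - k'' s) • x₀‖ := norm_add_le _ _
          _ = 1 := by rw [h1, h2]; ring
      have hpF : p (Λ F) = 1 := by rw [hrep F, hFy, hpx]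
      have hp₀F : p₀ (Λ F) = 1 := by rw [hrep₀ F, hFy₀, hp₀x]
      have hsum2 : (p + p₀) (Λ F) = 2 := by
        simp [hpF, hp₀F]
        norm_num
      have hnorm2 : ‖p + p₀‖ = 2 := by
        refine le_antisymm ?_ ?_
        · calc ‖p + p₀‖ ≤ ‖p‖ + ‖p₀‖ := norm_add_le _ _
            _ = 2 := by rw [hp1, hp₀1]; norm_num
        · have h6 := (p + p₀).le_opNorm (Λ F)
          rw [hsum2] at h6
          have h7 : ‖Λ F‖ ≤ 1 := le_trans (hΛnorm F) hFnorm
          have h8 : ‖(2:ℝ)‖ = 2 := by norm_num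
          rw [h8] at h6
          nlinarith [norm_nonneg (p + p₀)]
      have hpp₀ : p = p₀ := by
        have hQ : (p : StrongDual ℝ X) = (p₀ : StrongDual ℝ X) := by
          apply eq_of_norm_eq_of_norm_add_eq
          · show ‖p‖ = ‖p₀‖
            rw [hp1, hp₀1]
          · show ‖p + p₀‖ = ‖p‖ + ‖p₀‖
            rw [hnorm2, hp1, hp₀1]; norm_num
        exact hQ
      apply absurd _ hf₀
      calc p (f₀ y) = p (Λ f₀) := (hrep f₀).symm
        _ = p₀ (Λ f₀) := by rw [hpp₀]
        _ = p₀ (f₀ y₀) := hrep₀ f₀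
        _ = p (f₀ y₀) := by rw [hpp₀]
  -- conclusion
  refine ⟨U₀, y₀, ?_⟩
  intro f s
  rw [hΛeval f s, hmain (Lt s f)]
  rfl
end

section
/- Let G be a compact group, X a Banach space, φ a homeomorphism of G onto itself, and λ : G → I(X) a map into the surjective isometries of X. Suppose the operator (Tf)(s) = λ(s) f(φ(s)) on C(G,X) commutes with every left translation L_t. Then λ is constant: λ(ts) = λ(s) for all s, t ∈ G, so there is a single surjective isometry U of X with λ(s) = U for all s. -/
/-- If `(Tf)(s) = λ(s) f(φ(s))` commutes with every left translation on `C(G,X)`,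
then `λ` is constant. -/
theorem lambda_constant_of_commutes
    {G : Type*} [Group G] [TopologicalSpace G] [IsTopologicalGroup G] [CompactSpace G]
    {X : Type*} [NormedAddCommGroup X] [NormedSpace ℝ X]
    (Λ : G → (X ≃ₗᵢ[ℝ] X)) (φ : G ≃ₜ G)
    -- `T L_t = L_t T` applied pointwise: `λ(s) f(t·φ(s)) = λ(ts) f(φ(ts))` for all `f ∈ C(G,X)`:
    (hcomm : ∀ (t : G) (f : C(G, X)) (s : G), Λ s (f (t * φ s)) = Λ (t * s) (f (φ (t * s)))) :
    (∀ s t : G, Λ (t * s) = Λ s) ∧ ∃ U : X ≃ₗᵢ[ℝ] X, ∀ s : G, Λ s = U := by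
  have key : ∀ s t : G, Λ (t * s) = Λ s := by
    intro s t
    ext x
    exact (hcomm t (ContinuousMap.const G x) s).symm
  refine ⟨key, Λ 1, fun s => ?_⟩
  have := key 1 s
  simpa using this
end
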